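/- If x is a quadratic irrational of the form x = (p + √d)/q with d a nonsquare positive integer, then the complete quotients of the continued fraction of x take only finitely many values; consequently two complete quotients coincide and the continued fraction of x is eventually periodic. -/

import Mathlib

/-!
Write the complete quotients as `x_k = (P_k + √D) / Q_k` with `Q_k ∣ D - P_k²`. The integer
recursion producing `(P_{k+1}, Q_{k+1})` from `(P_k, Q_k)` and `a_k` does not see the sign of
`√D`, so it also produces the conjugates `x̄_k = (P_k - √D) / Q_k`, which obey
`x̄_{k+1} = 1 / (x̄_k - a_k)`. Since `x_k - x̄_k = 2√D / Q_k` and `t ↦ 1 / (t - a)` expands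
distances on `(a, a + 1)`, the conjugate cannot stay positive: `|Q_k|` would decrease forever.
Once negative it stays in `(-1, 0)`, so `x_k` is reduced, which forces `0 < P_k < √D` and
`0 < Q_k < 2√D`. Hence the `x_k` take finitely many values; two of them coincide, and from
then on the partial quotients repeat.
-/

/-- Complete quotients of the continued fraction of x : x₀ = x, x_{k+1} = 1/(x_k - ⌊x_k⌋). -/
noncomputable def cq (x : ℝ) : ℕ → ℝ
  | 0 => x
  | k + 1 => 1 / (cq x k - (⌊cq x k⌋ : ℝ))

/-- Partial quotients a_k = ⌊x_k⌋. -/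
noncomputable def pq (x : ℝ) (k : ℕ) : ℤ := ⌊cq x k⌋

theorem irrational_cq {x : ℝ} (hx : Irrational x) : ∀ k, Irrational (cq x k)
  | 0 => hx
  | k + 1 => by
    rw [cq, one_div]
    exact ((irrational_cq hx k).sub_intCast _).inv

theorem cq_sub_floor_mem_Ioo {x : ℝ} (hx : Irrational x) (k : ℕ) :
    cq x k - ⌊cq x k⌋ ∈ Set.Ioo (0 : ℝ) 1 := by
  rw [Int.self_sub_floor]
  exact ⟨Int.fract_pos.mpr ((irrational_cq hx k).ne_int _), Int.fract_lt_one _⟩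

theorem one_lt_cq_succ {x : ℝ} (hx : Irrational x) (k : ℕ) : 1 < cq x (k + 1) :=
  one_lt_one_div (cq_sub_floor_mem_Ioo hx k).1 (cq_sub_floor_mem_Ioo hx k).2

theorem one_lt_cq {x : ℝ} (hx1 : 1 < x) (hx : Irrational x) : ∀ k, 1 < cq x k
  | 0 => hx1
  | k + 1 => one_lt_cq_succ hx k

theorem one_le_floor_cq_succ {x : ℝ} (hx : Irrational x) (k : ℕ) : 1 ≤ ⌊cq x (k + 1)⌋ :=
  Int.le_floor.mpr (by exact_mod_cast (one_lt_cq_succ hx k).le)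

theorem cq_add_eq_of_eq {x : ℝ} {n m : ℕ} (h : cq x n = cq x m) (j : ℕ) :
    cq x (n + j) = cq x (m + j) := by
  induction j with
  | zero => exact h
  | succ j ih => rw [← add_assoc, ← add_assoc, cq, cq, ih]

theorem pq_add_sub_eq_of_cq_eq {x : ℝ} {n m : ℕ} (hnm : n ≤ m) (h : cq x n = cq x m) :
    ∀ k ≥ n, pq x (k + (m - n)) = pq x k := by
  intro k hk
  obtain ⟨j, rfl⟩ := Nat.exists_eq_add_of_le hk
  rw [pq, pq, show n + j + (m - n) = m + j by omega, ← cq_add_eq_of_eq h]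

theorem abs_sub_lt_abs_one_div_sub {t u : ℝ} (ht : t ∈ Set.Ioo (0 : ℝ) 1)
    (hu : u ∈ Set.Ioo (0 : ℝ) 1) (htu : t ≠ u) : |t - u| < |1 / t - 1 / u| := by
  have htu0 : 0 < t * u := mul_pos ht.1 hu.1
  have hlt : t * u < 1 := mul_lt_one_of_nonneg_of_lt_one_left ht.1.le ht.2 hu.2.le
  rw [div_sub_div _ _ ht.1.ne' hu.1.ne', abs_div, abs_of_pos htu0, lt_div_iff₀ htu0,
    one_mul, mul_one, abs_sub_comm]
  exact mul_lt_of_lt_one_right (abs_pos.mpr (sub_ne_zero.mpr htu.symm)) hlt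

theorem one_div_sub_mem_Ioo {y a : ℝ} (hy : y < 0) (ha : 1 ≤ a) :
    1 / (y - a) ∈ Set.Ioo (-1 : ℝ) 0 := by
  have h : y - a < -1 := by linarith
  refine ⟨?_, one_div_neg.mpr (by linarith)⟩
  rw [lt_div_iff_of_neg (by linarith)]
  linarith

/-- `(P, Q)` stands for `(P + s) / Q`; with `s ^ 2 = D` irrational, `surd (-s)` is its
Galois conjugate. -/
noncomputable def surd (s : ℝ) (r : ℤ × ℤ) : ℝ := (r.1 + s) / r.2

def IsSurdPair (D : ℤ) (r : ℤ × ℤ) : Prop := r.2 ≠ 0 ∧ r.2 ∣ D - r.1 ^ 2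

/-- The pair of `1 / ((P + s) / Q - a)` (`surd_sqrtStep`), whatever the sign of `s`.
The division is exact when `Q ∣ D - P ^ 2` (`sqrtStep_snd_mul`). -/
def sqrtStep (D a : ℤ) (r : ℤ × ℤ) : ℤ × ℤ :=
  (a * r.2 - r.1, (D - (a * r.2 - r.1) ^ 2) / r.2)

section Surd

variable {D : ℤ} {s : ℝ} {r : ℤ × ℤ}

theorem surd_sub_surd_neg (s : ℝ) (r : ℤ × ℤ) : surd s r - surd (-s) r = 2 * s / r.2 := by
  unfold surd; ring

theorem abs_surd_sub_surd_neg (s : ℝ) (r : ℤ × ℤ) :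
    |surd s r - surd (-s) r| = 2 * |s| / |(r.2 : ℝ)| := by
  rw [surd_sub_surd_neg, abs_div, abs_mul, abs_two]

theorem irrational_surd (hs : Irrational s) (hr : r.2 ≠ 0) : Irrational (surd s r) :=
  (hs.intCast_add _).div_intCast hr

theorem sub_sq_ne_zero (hs : Irrational s) (hs2 : s ^ 2 = D) (n : ℤ) :
    (D : ℝ) - n ^ 2 ≠ 0 := by
  rw [← hs2, sq_sub_sq]
  exact mul_ne_zero (hs.add_intCast n).ne_zero (hs.sub_intCast n).ne_zero

theorem sqrtStep_snd_mul (a : ℤ) (h : r.2 ∣ D - r.1 ^ 2) :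
    (sqrtStep D a r).2 * r.2 = D - (sqrtStep D a r).1 ^ 2 := by
  have hsplit : D - (a * r.2 - r.1) ^ 2 = (D - r.1 ^ 2) + r.2 * (2 * a * r.1 - a ^ 2 * r.2) := by
    ring
  exact Int.ediv_mul_cancel (hsplit ▸ dvd_add h (dvd_mul_right _ _))

theorem isSurdPair_sqrtStep (hs : Irrational s) (hs2 : s ^ 2 = D) (hr : IsSurdPair D r)
    (a : ℤ) : IsSurdPair D (sqrtStep D a r) := by
  have hmul := sqrtStep_snd_mul a hr.2
  refine ⟨fun h0 => sub_sq_ne_zero hs hs2 (sqrtStep D a r).1 ?_, Dvd.intro _ hmul⟩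
  exact_mod_cast (by rw [← hmul, h0, zero_mul] : D - (sqrtStep D a r).1 ^ 2 = 0)

theorem surd_sqrtStep (hs : Irrational s) (hs2 : s ^ 2 = D) (hr : IsSurdPair D r) (a : ℤ) :
    surd s (sqrtStep D a r) = 1 / (surd s r - a) := by
  have hQ' : ((sqrtStep D a r).2 : ℝ) ≠ 0 :=
    Int.cast_ne_zero.mpr (isSurdPair_sqrtStep hs hs2 hr a).1
  have hQ : (r.2 : ℝ) ≠ 0 := Int.cast_ne_zero.mpr hr.1
  have hmul : ((sqrtStep D a r).2 : ℝ) * r.2 = D - (sqrtStep D a r).1 ^ 2 := by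
    exact_mod_cast sqrtStep_snd_mul a hr.2
  have hsub : surd s r - a = (s - (sqrtStep D a r).1) / r.2 := by
    unfold surd sqrtStep
    push_cast
    field_simp
    ring
  rw [hsub, one_div_div, surd, div_eq_div_iff hQ' (hs.sub_intCast _).ne_zero]
  linear_combination hs2 - hmul

end Surd

theorem surd_pair_bounds {s : ℝ} (hs0 : 0 < s) {r : ℤ × ℤ} (hx : 1 < surd s r)
    (hy : surd (-s) r ∈ Set.Ioo (-1) 0) :
    0 < r.1 ∧ (r.1 : ℝ) < s ∧ 0 < r.2 ∧ (r.2 : ℝ) < 2 * s := by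
  unfold surd at hx hy
  obtain ⟨hy1, hy0⟩ := hy
  have hQ : (0 : ℝ) < r.2 := by
    by_contra! hQ
    rcases hQ.lt_or_eq with hQ | hQ
    · rw [lt_div_iff_of_neg hQ] at hx
      rw [div_neg_iff] at hy0
      rcases hy0 with h | h <;> linarith [h.1, h.2]
    · rw [hQ, div_zero] at hx
      linarith
  rw [lt_div_iff₀ hQ] at hx hy1
  rw [div_neg_iff] at hy0
  have hPs : (r.1 : ℝ) < s := by rcases hy0 with h | h <;> linarith [h.1, h.2]
  have hP : (0 : ℝ) < r.1 := by linarith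
  exact ⟨by exact_mod_cast hP, hPs, by exact_mod_cast hQ, by linarith⟩

noncomputable def cqPair (x : ℝ) (D : ℤ) (r : ℤ × ℤ) : ℕ → ℤ × ℤ
  | 0 => r
  | k + 1 => sqrtStep D ⌊cq x k⌋ (cqPair x D r k)

section CqPair

variable {x : ℝ} {D : ℤ} {s : ℝ} {r : ℤ × ℤ}

theorem isSurdPair_cqPair (hs : Irrational s) (hs2 : s ^ 2 = D) (hr : IsSurdPair D r) :
    ∀ k, IsSurdPair D (cqPair x D r k)
  | 0 => hr
  | k + 1 => isSurdPair_sqrtStep hs hs2 (isSurdPair_cqPair hs hs2 hr k) _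

theorem cq_eq_surd_cqPair (hs : Irrational s) (hs2 : s ^ 2 = D) (hr : IsSurdPair D r)
    (hx : x = surd s r) : ∀ k, cq x k = surd s (cqPair x D r k)
  | 0 => hx
  | k + 1 => by
    rw [cq, cqPair, surd_sqrtStep hs hs2 (isSurdPair_cqPair hs hs2 hr k),
      ← cq_eq_surd_cqPair hs hs2 hr hx k]

theorem surd_neg_cqPair_succ (hs : Irrational s) (hs2 : s ^ 2 = D) (hr : IsSurdPair D r)
    (k : ℕ) :
    surd (-s) (cqPair x D r (k + 1)) = 1 / (surd (-s) (cqPair x D r k) - ⌊cq x k⌋) :=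
  surd_sqrtStep hs.neg (by rw [neg_sq, hs2]) (isSurdPair_cqPair hs hs2 hr k) _

theorem exists_surd_neg_cqPair_neg (hs : Irrational s) (hs2 : s ^ 2 = D) (hr : IsSurdPair D r)
    (hx : x = surd s r) : ∃ k, surd (-s) (cqPair x D r k) < 0 := by
  have hirr : Irrational x := hx ▸ irrational_surd hs hr.1
  have hQ (j : ℕ) : ((cqPair x D r j).2 : ℝ) ≠ 0 :=
    Int.cast_ne_zero.mpr (isSurdPair_cqPair hs hs2 hr j).1
  by_contra! hy
  have hpos : ∀ k, 0 < surd (-s) (cqPair x D r k) - ⌊cq x k⌋ := fun k =>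
    one_div_pos.mp (surd_neg_cqPair_succ hs hs2 hr k ▸
      (hy (k + 1)).lt_of_ne' (irrational_surd hs.neg (isSurdPair_cqPair hs hs2 hr _).1).ne_zero)
  have hmem : ∀ k, surd (-s) (cqPair x D r k) - ⌊cq x k⌋ ∈ Set.Ioo (0 : ℝ) 1 := by
    intro k
    have h1 : (1 : ℝ) ≤ ⌊cq x (k + 1)⌋ := by exact_mod_cast one_le_floor_cq_succ hirr k
    have h2 : 1 < surd (-s) (cqPair x D r (k + 1)) := by linarith [hpos (k + 1)]
    rw [surd_neg_cqPair_succ hs hs2 hr, one_lt_div (hpos k)] at h2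
    exact ⟨hpos k, h2⟩
  have hanti : StrictAnti fun k => (cqPair x D r k).2.natAbs := by
    refine strictAnti_nat_of_succ_lt fun k => ?_
    have hne : cq x k - ⌊cq x k⌋ ≠ surd (-s) (cqPair x D r k) - ⌊cq x k⌋ := by
      rw [cq_eq_surd_cqPair hs hs2 hr hx, Ne, sub_left_inj, ← sub_eq_zero, surd_sub_surd_neg]
      exact div_ne_zero (mul_ne_zero two_ne_zero hs.ne_zero) (hQ k)
    have hgrow := abs_sub_lt_abs_one_div_sub (cq_sub_floor_mem_Ioo hirr k) (hmem k) hne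
    rw [sub_sub_sub_cancel_right, ← surd_neg_cqPair_succ hs hs2 hr, ← cq,
      cq_eq_surd_cqPair hs hs2 hr hx, cq_eq_surd_cqPair hs hs2 hr hx, abs_surd_sub_surd_neg,
      abs_surd_sub_surd_neg, div_lt_div_iff_of_pos_left (by positivity [hs.ne_zero])
        (abs_pos.mpr (hQ k)) (abs_pos.mpr (hQ (k + 1)))] at hgrow
    rw [← Int.cast_abs, ← Int.cast_abs, Int.cast_lt, Int.abs_eq_natAbs,
      Int.abs_eq_natAbs] at hgrow
    exact_mod_cast hgrow
  exact not_strictAnti_of_wellFoundedLT _ hanti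

theorem surd_neg_cqPair_mem_Ioo (hs : Irrational s) (hs2 : s ^ 2 = D) (hr : IsSurdPair D r)
    (hx : x = surd s r) (hx1 : 1 < x) {k : ℕ} (hk : surd (-s) (cqPair x D r k) < 0) :
    ∀ m, k < m → surd (-s) (cqPair x D r m) ∈ Set.Ioo (-1) 0 := by
  have hirr : Irrational x := hx ▸ irrational_surd hs hr.1
  have hstep {j : ℕ} (hj : surd (-s) (cqPair x D r j) < 0) :
      surd (-s) (cqPair x D r (j + 1)) ∈ Set.Ioo (-1) 0 := by
    rw [surd_neg_cqPair_succ hs hs2 hr]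
    have ha : (1 : ℤ) ≤ ⌊cq x j⌋ :=
      Int.le_floor.mpr (by exact_mod_cast (one_lt_cq hx1 hirr j).le)
    exact one_div_sub_mem_Ioo hj (by exact_mod_cast ha)
  intro m hm
  induction m, hm using Nat.le_induction with
  | base => exact hstep hk
  | succ m _ ih => exact hstep ih.2

theorem finite_range_cq (hs0 : 0 < s) (hs : Irrational s) (hs2 : s ^ 2 = D)
    (hr : IsSurdPair D r) (hx : x = surd s r) (hx1 : 1 < x) : (Set.range (cq x)).Finite := by
  have hirr : Irrational x := hx ▸ irrational_surd hs hr.1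
  obtain ⟨k, hk⟩ := exists_surd_neg_cqPair_neg hs hs2 hr hx
  refine (((Set.finite_Iic k).image (cq x)).union
    ((Set.finite_Icc ((1, 1) : ℤ × ℤ) (⌊s⌋, ⌊2 * s⌋)).image (surd s))).subset ?_
  rintro _ ⟨m, rfl⟩
  rcases le_or_gt m k with hm | hm
  · exact Or.inl ⟨m, hm, rfl⟩
  · rw [cq_eq_surd_cqPair hs hs2 hr hx]
    obtain ⟨hP0, hPs, hQ0, hQs⟩ := surd_pair_bounds hs0
      (cq_eq_surd_cqPair hs hs2 hr hx m ▸ one_lt_cq hx1 hirr m)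
      (surd_neg_cqPair_mem_Ioo hs hs2 hr hx hx1 hk m hm)
    exact Or.inr
      ⟨_, ⟨⟨hP0, hQ0⟩, Int.le_floor.mpr hPs.le, Int.le_floor.mpr hQs.le⟩, rfl⟩

end CqPair

theorem exists_surd_eq {d : ℕ} {p q : ℤ} (hq : q ≠ 0) {x : ℝ}
    (hx : x = ((p : ℝ) + Real.sqrt d) / (q : ℝ)) (hirr : Irrational x) :
    ∃ (D : ℤ) (s : ℝ) (r : ℤ × ℤ),
      0 < s ∧ Irrational s ∧ s ^ 2 = D ∧ IsSurdPair D r ∧ x = surd s r := by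
  have hqR : (q : ℝ) ≠ 0 := Int.cast_ne_zero.mpr hq
  have hsd : Irrational (Real.sqrt d) := by
    have : Real.sqrt d = x * q - p := by rw [hx]; field_simp; ring
    exact this ▸ (hirr.mul_intCast hq).sub_intCast p
  have hs : Irrational (|q| * Real.sqrt d) := by
    simpa using hsd.intCast_mul (abs_ne_zero.mpr hq)
  refine ⟨d * q ^ 2, |q| * Real.sqrt d, (p * |q|, q * |q|),
    (by positivity : (0 : ℝ) ≤ _).lt_of_ne' hs.ne_zero, hs, ?_, ⟨?_, ?_⟩, ?_⟩
  · push_cast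
    rw [mul_pow, sq_abs, Real.sq_sqrt (Nat.cast_nonneg d)]
    ring
  · exact mul_ne_zero hq (abs_ne_zero.mpr hq)
  · rw [show (d : ℤ) * q ^ 2 - (p * |q|) ^ 2 = q * q * (d - p ^ 2) by rw [mul_pow, sq_abs]; ring]
    exact dvd_mul_of_dvd_left (mul_dvd_mul_left q (abs_dvd_self q)) _
  · rw [hx, surd]
    push_cast
    field_simp [abs_ne_zero.mpr hqR]

theorem quadratic_irrational_periodic_cf_general (d : ℕ) (p q : ℤ) (hq : q ≠ 0) (x : ℝ)
    (hx : x = ((p : ℝ) + Real.sqrt d) / (q : ℝ)) (hx1 : 1 < x) (hirr : Irrational x) :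
    (Set.range (cq x)).Finite ∧
    (∃ n m, n < m ∧ cq x n = cq x m) ∧
    (∃ m per, 1 ≤ per ∧ ∀ k ≥ m, pq x (k + per) = pq x k) := by
  obtain ⟨D, s, r, hs0, hs, hs2, hr, hxr⟩ := exists_surd_eq hq hx hirr
  have hfin := finite_range_cq hs0 hs hs2 hr hxr hx1
  obtain ⟨n, m, hnm, heq⟩ := hfin.exists_lt_map_eq_of_forall_mem Set.mem_range_self
  exact ⟨hfin, ⟨n, m, hnm, heq⟩, n, m - n, by omega, pq_add_sub_eq_of_cq_eq hnm.le heq⟩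

/-- Theaetetus/Lagrange: if x = (p + √d)/q is a quadratic irrational (d a nonsquare
positive integer), then the complete quotients take only finitely many values, hence two
of them coincide, and the continued fraction of x is eventually periodic. -/
theorem quadratic_irrational_periodic_cf (d : ℕ) (hd0 : 0 < d)
    (hd : ¬∃ m : ℕ, m * m = d) (p q : ℤ) (hq : q ≠ 0) (x : ℝ)
    (hx : x = ((p : ℝ) + Real.sqrt d) / (q : ℝ)) (hx1 : 1 < x) (hirr : Irrational x) :
    (Set.range (cq x)).Finite ∧
    (∃ n m, n < m ∧ cq x n = cq x m) ∧
    (∃ m per, 1 ≤ per ∧ ∀ k ≥ m, pq x (k + per) = pq x k) :=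
  quadratic_irrational_periodic_cf_general d p q hq x hx hx1 hirr
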